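/- Let α > 0, b > 0, ν ≤ 0, let μ : [0,b] × [0,∞) → ℝ be continuous with μ(z,t) ≤ 0 for all (z,t), and let w : [0,b] × [0,∞) → ℝ be twice continuously differentiable in z and continuously differentiable in t with ∂_t w jointly continuous, satisfying ∂_t w(z,t) = α ∂_z² w(z,t) + μ(z,t) w(z,t) for z ∈ (0,b), w(0,t) = 0, and ∂_z w(b,t) = ν w(b,t). Then the energy E(t) = ∫₀ᵇ w(z,t)² dz decays exponentially: E(t) ≤ E(0)·exp(−(4α/b²)·t) for all t ≥ 0. -/

import Mathlib

/-!
Multiplying the equation by `2w` and integrating by parts in `z` gives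
`E' = -2α ∫ (∂_z w)² + 2αν w(b,t)² + 2 ∫ μ w² ≤ -2α ∫ (∂_z w)²`, the boundary term at `0`
vanishing because `w(0,t) = 0`. The same condition gives `w(z,t) = ∫₀ᶻ ∂_z w`, so by
Cauchy–Schwarz `w(z,t)² ≤ z ∫₀ᵇ (∂_z w)²`, and integrating in `z` yields the Poincaré inequality
`E ≤ (b²/2) ∫₀ᵇ (∂_z w)²`. Hence `E' ≤ -(4α/b²) E`, and Grönwall's inequality concludes.
Differentiating `E` under the integral sign is legitimate because `∂ₜ(w²) = 2w ∂ₜw` is jointly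
continuous, `w` itself being jointly continuous as `w(z,0) + ∫₀ᵗ ∂ₜw(z,s) ds`.
-/

open intervalIntegral
open MeasureTheory (volume)
open Set Real Filter

theorem sq_integral_le_mul_integral_sq {g : ℝ → ℝ} {a b : ℝ} (hab : a ≤ b)
    (hg : IntervalIntegrable g volume a b)
    (hg2 : IntervalIntegrable (fun s => g s ^ 2) volume a b) :
    (∫ s in a..b, g s) ^ 2 ≤ (b - a) * ∫ s in a..b, g s ^ 2 := by
  set I := ∫ s in a..b, g s
  set J := ∫ s in a..b, g s ^ 2
  have amgm : ∀ c, 2 * c * I ≤ (b - a) * c ^ 2 + J := fun c =>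
    calc 2 * c * I = ∫ s in a..b, 2 * c * g s := (integral_const_mul _ _).symm
      _ ≤ ∫ s in a..b, (c ^ 2 + g s ^ 2) :=
          integral_mono_on hab (hg.const_mul _) (intervalIntegrable_const.add hg2)
            fun s _ => by nlinarith [sq_nonneg (c - g s)]
      _ = (b - a) * c ^ 2 + J := by simp [integral_add intervalIntegrable_const hg2, J]
  rcases hab.eq_or_lt with rfl | hlt
  · simp [I]
  · have key := amgm (I / (b - a))
    have hpos : 0 < b - a := sub_pos.mpr hlt
    field_simp at key
    nlinarith

theorem integral_sq_le_half_sq_mul_integral_deriv_sq {f : ℝ → ℝ} {a b : ℝ} (hab : a ≤ b)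
    (hf : ContDiff ℝ 1 f) (ha : f a = 0) :
    ∫ z in a..b, f z ^ 2 ≤ (b - a) ^ 2 / 2 * ∫ z in a..b, deriv f z ^ 2 := by
  have hf' : Continuous (deriv f) := hf.continuous_deriv le_rfl
  set P := ∫ z in a..b, deriv f z ^ 2
  have pointwise : ∀ x ∈ Icc a b, f x ^ 2 ≤ (x - a) * P := fun x hx => by
    have ftc : f x = ∫ s in a..x, deriv f s := by
      rw [integral_deriv_eq_sub (fun y _ => hf.differentiable one_ne_zero y)
        (hf'.intervalIntegrable _ _), ha, sub_zero]
    have mono : ∫ s in a..x, deriv f s ^ 2 ≤ P :=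
      integral_mono_interval le_rfl hx.1 hx.2 (Eventually.of_forall fun _ => sq_nonneg _)
        ((hf'.pow 2).intervalIntegrable _ _)
    calc f x ^ 2 ≤ (x - a) * ∫ s in a..x, deriv f s ^ 2 := ftc ▸
          sq_integral_le_mul_integral_sq hx.1 (hf'.intervalIntegrable _ _)
            ((hf'.pow 2).intervalIntegrable _ _)
      _ ≤ (x - a) * P := mul_le_mul_of_nonneg_left mono (sub_nonneg.mpr hx.1)
  calc ∫ z in a..b, f z ^ 2 ≤ ∫ z in a..b, (z - a) * P :=
        integral_mono_on hab ((hf.continuous.pow 2).intervalIntegrable _ _)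
          ((continuous_id.sub continuous_const |>.mul continuous_const).intervalIntegrable _ _)
          pointwise
    _ = (b - a) ^ 2 / 2 * P := by
        rw [integral_mul_const, integral_comp_sub_right (fun z => z), integral_id]
        ring

theorem continuous_of_continuous_deriv_right {X : Type*} [TopologicalSpace X] {w : X → ℝ → ℝ}
    (hw0 : Continuous fun z => w z 0) (hw : ∀ z, Differentiable ℝ (w z))
    (hw' : Continuous fun p : X × ℝ => deriv (w p.1) p.2) :
    Continuous fun p : X × ℝ => w p.1 p.2 := by
  have ftc : ∀ p : X × ℝ, w p.1 p.2 = w p.1 0 + ∫ s in (0 : ℝ)..p.2, deriv (w p.1) s :=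
    fun p => by
      rw [integral_deriv_eq_sub (fun s _ => hw p.1 s)
        ((hw'.comp (Continuous.prodMk_right p.1)).intervalIntegrable _ _)]
      ring
  simp_rw [ftc]
  exact (hw0.comp continuous_fst).add
    (continuous_parametric_primitive_of_continuous (f := fun z => deriv (w z)) hw')

theorem hasDerivAt_integral_of_continuous_deriv {E : Type*} [NormedAddCommGroup E]
    [NormedSpace ℝ E] [CompleteSpace E] {F F' : ℝ → ℝ → E} {a b t₀ : ℝ}
    (hF : ∀ t, Continuous fun z => F z t)
    (hF' : Continuous fun p : ℝ × ℝ => F' p.1 p.2)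
    (hderiv : ∀ z t, HasDerivAt (F z) (F' z t) t) :
    HasDerivAt (fun t => ∫ z in a..b, F z t) (∫ z in a..b, F' z t₀) t₀ := by
  obtain ⟨M, hM⟩ := (isCompact_uIcc.prod (isCompact_closedBall t₀ 1)).exists_bound_of_continuousOn
      hF'.continuousOn
  refine (hasDerivAt_integral_of_dominated_loc_of_deriv_le (bound := fun _ => M)
    (Metric.closedBall_mem_nhds t₀ one_pos)
    (Eventually.of_forall fun t => (hF t).aestronglyMeasurable)
    ((hF t₀).intervalIntegrable _ _)
    (hF'.comp (Continuous.prodMk_left t₀)).aestronglyMeasurable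
    (Eventually.of_forall fun z hz t ht => hM (z, t) ⟨uIoc_subset_uIcc hz, ht⟩)
    intervalIntegrable_const
    (Eventually.of_forall fun z _ t _ => hderiv z t)).2

theorem integral_mul_deriv_deriv {f : ℝ → ℝ} (hf : ContDiff ℝ 2 f) (a b : ℝ) :
    ∫ z in a..b, f z * deriv (deriv f) z
      = f b * deriv f b - f a * deriv f a - ∫ z in a..b, deriv f z ^ 2 := by
  have hf' : ContDiff ℝ 1 (deriv f) := hf.iterate_deriv' 1 1
  simpa only [sq] using integral_mul_deriv_eq_deriv_mul
    (fun z _ => ((hf.differentiable two_ne_zero) z).hasDerivAt)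
    (fun z _ => ((hf'.differentiable one_ne_zero) z).hasDerivAt)
    ((hf.continuous_deriv one_le_two).intervalIntegrable _ _)
    ((hf'.continuous_deriv le_rfl).intervalIntegrable _ _)

theorem integral_mul_reaction_diffusion_le {α b ν : ℝ} (hα : 0 ≤ α) (hb : 0 < b) (hν : ν ≤ 0)
    {m f : ℝ → ℝ} (hm : Continuous m) (hm_nonpos : ∀ z ∈ Icc 0 b, m z ≤ 0)
    (hf : ContDiff ℝ 2 f) (h0 : f 0 = 0) (hrobin : deriv f b = ν * f b) :
    ∫ z in (0 : ℝ)..b, 2 * f z * (α * deriv (deriv f) z + m z * f z)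
      ≤ -(4 * α / b ^ 2) * ∫ z in (0 : ℝ)..b, f z ^ 2 := by
  have hfc : Continuous f := hf.continuous
  have hf'' : Continuous (deriv (deriv f)) := (hf.iterate_deriv' 1 1).continuous_deriv le_rfl
  set P := ∫ z in (0 : ℝ)..b, deriv f z ^ 2
  have split : ∫ z in (0 : ℝ)..b, 2 * f z * (α * deriv (deriv f) z + m z * f z)
      = 2 * α * (ν * f b ^ 2 - P) + 2 * ∫ z in (0 : ℝ)..b, m z * f z ^ 2 := by
    have hsum : (fun z => 2 * f z * (α * deriv (deriv f) z + m z * f z))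
        = fun z => 2 * α * (f z * deriv (deriv f) z) + 2 * (m z * f z ^ 2) := by
      funext z; ring
    rw [hsum, integral_add
      ((by fun_prop : Continuous fun z => 2 * α * (f z * deriv (deriv f) z)).intervalIntegrable _ _)
      ((by fun_prop : Continuous fun z => 2 * (m z * f z ^ 2)).intervalIntegrable _ _),
      integral_const_mul, integral_const_mul, integral_mul_deriv_deriv hf, h0, hrobin]
    ring
  have reaction_nonpos : ∫ z in (0 : ℝ)..b, m z * f z ^ 2 ≤ 0 :=
    (integral_mono_on hb.le ((hm.mul (hfc.pow 2)).intervalIntegrable _ _) intervalIntegrable_const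
      fun z hz => mul_nonpos_of_nonpos_of_nonneg (hm_nonpos z hz) (sq_nonneg _)).trans_eq
        integral_zero
  have poincare : ∫ z in (0 : ℝ)..b, f z ^ 2 ≤ b ^ 2 / 2 * P := by
    simpa using integral_sq_le_half_sq_mul_integral_deriv_sq hb.le (hf.of_le one_le_two) h0
  have boundary : 2 * α * (ν * f b ^ 2) ≤ 0 :=
    mul_nonpos_of_nonneg_of_nonpos (by positivity)
      (mul_nonpos_of_nonpos_of_nonneg hν (sq_nonneg _))
  have rate : 4 * α / b ^ 2 * (b ^ 2 / 2 * P) = 2 * α * P := by field_simp; ring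
  rw [split]
  linarith [mul_le_mul_of_nonneg_left poincare (by positivity : 0 ≤ 4 * α / b ^ 2)]

theorem le_mul_exp_of_hasDerivAt_le_neg_mul {E E' : ℝ → ℝ} {c : ℝ}
    (hE : ∀ t, HasDerivAt E (E' t) t) (hdecay : ∀ t, 0 ≤ t → E' t ≤ -c * E t) :
    ∀ t, 0 ≤ t → E t ≤ E 0 * exp (-c * t) := fun t ht => by
  simpa [gronwallBound_ε0] using
    le_gronwallBound_of_liminf_deriv_right_le (b := t) (K := -c) (ε := 0)
    (fun x _ => (hE x).continuousAt.continuousWithinAt)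
    (fun x _ r hr => by
      simpa only [slope_def_module, smul_eq_mul] using
        (hE x).hasDerivWithinAt.liminf_right_slope_le hr)
    le_rfl (fun x hx => (add_zero (-c * E x)).symm ▸ hdecay x hx.1) t ⟨ht, le_rfl⟩

/-- **Exponential decay of the target-system energy.**
Let `α > 0`, `b > 0`, `ν ≤ 0`, let `μ` be continuous with `μ z t ≤ 0` for all
`(z,t) ∈ [0,b] × [0,∞)`, and let `w` (twice continuously differentiable in `z`, continuously
differentiable in `t` with jointly continuous `∂ₜ w`) satisfy
`∂ₜ w = α ∂_z² w + μ w` for `z ∈ (0,b)` and `t ≥ 0`, `w 0 t = 0`, and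
`∂_z w (b,t) = ν w (b,t)`.  Then the energy `E t = ∫₀ᵇ w(z,t)² dz` decays exponentially:
`E t ≤ E 0 * exp (−(4α/b²) t)` for all `t ≥ 0`. -/
theorem target_system_exponential_stability
    (α b ν : ℝ) (hα : 0 < α) (hb : 0 < b) (hν : ν ≤ 0)
    (μ : ℝ → ℝ → ℝ) (hμ : Continuous fun p : ℝ × ℝ => μ p.1 p.2)
    (hμ_nonpos : ∀ z ∈ Set.Icc 0 b, ∀ t : ℝ, 0 ≤ t → μ z t ≤ 0)
    (w : ℝ → ℝ → ℝ)
    (hwz : ∀ t, ContDiff ℝ 2 (fun z => w z t))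
    (hwt : ∀ z, ContDiff ℝ 1 (fun t => w z t))
    (hwt_cont : Continuous fun p : ℝ × ℝ => deriv (fun τ => w p.1 τ) p.2)
    (hpde : ∀ t : ℝ, 0 ≤ t → ∀ z ∈ Set.Ioo 0 b,
      deriv (fun τ => w z τ) t = α * deriv (deriv (fun x => w x t)) z + μ z t * w z t)
    (hdir : ∀ t : ℝ, 0 ≤ t → w 0 t = 0)
    (hrobin : ∀ t : ℝ, 0 ≤ t → deriv (fun x => w x t) b = ν * w b t)
    (En : ℝ → ℝ)
    (hEn : ∀ t, En t = ∫ z in (0:ℝ)..b, (w z t) ^ 2) :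
    ∀ t : ℝ, 0 ≤ t → En t ≤ En 0 * Real.exp (-(4 * α / b ^ 2) * t) := by
  have hw : Continuous fun p : ℝ × ℝ => w p.1 p.2 :=
    continuous_of_continuous_deriv_right (hwz 0).continuous
      (fun z => (hwt z).differentiable one_ne_zero) hwt_cont
  have energy_deriv : ∀ t, HasDerivAt En (∫ z in (0 : ℝ)..b,
      2 * w z t * deriv (fun τ => w z τ) t) t := fun t => by
    rw [show En = _ from funext hEn]
    refine hasDerivAt_integral_of_continuous_deriv (F := fun z t => w z t ^ 2)
      (F' := fun z t => 2 * w z t * deriv (fun τ => w z τ) t)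
      (fun t => (hwz t).continuous.pow 2) ((continuous_const.mul hw).mul hwt_cont) fun z t => ?_
    simpa using (((hwt z).differentiable one_ne_zero t).hasDerivAt).fun_pow 2
  refine le_mul_exp_of_hasDerivAt_le_neg_mul energy_deriv fun t ht => ?_
  rw [integral_congr_Ioo_of_le hb.le fun z hz => by rw [hpde t ht z hz], hEn t]
  exact integral_mul_reaction_diffusion_le hα.le hb hν (hμ.comp (.prodMk_left t))
    (fun z hz => hμ_nonpos z hz t ht) (hwz t) (hdir t ht) (hrobin t ht)
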